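/- arXiv:1909.00323 — 3 statements merged into one kernel-verified Lean document; each statement's English description precedes it below -/
import Mathlib

section
/- Suppose random variables I ∈ [n] and Z_1,...,Z_n ∈ {0,1}^ℓ are jointly distributed such that the marginal distribution of (Z_1,...,Z_n) is uniform on {0,1}^{nℓ}. Then the Shannon entropy of Z_I satisfies H(Z_I) ≥ ℓ - log₂ n. -/
open Finset

noncomputable section

/-- `p` is a probability mass function on the finite type `Ω`. -/
def IsPMF {Ω : Type*} [Fintype Ω] (p : Ω → ℝ) : Prop :=
  (∀ ω, 0 ≤ p ω) ∧ ∑ ω, p ω = 1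

/-- Probability that the random variable `X` equals `x` under `p`. -/
def pr {Ω α : Type*} [Fintype Ω] [DecidableEq α] (p : Ω → ℝ) (X : Ω → α) (x : α) : ℝ :=
  ∑ ω, if X ω = x then p ω else 0

/-- Shannon entropy (base 2) of a distribution `q` on a finite type. -/
def Hq {α : Type*} [Fintype α] (q : α → ℝ) : ℝ :=
  ∑ x, -(q x * Real.logb 2 (q x))

/-- Shannon entropy (base 2) of the random variable `X` under `p`. -/
def Hent {Ω α : Type*} [Fintype Ω] [Fintype α] [DecidableEq α] (p : Ω → ℝ) (X : Ω → α) : ℝ :=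
  Hq (pr p X)

/-- Conditional entropy `H(X|Y) = H(X,Y) - H(Y)`. -/
def condH {Ω α β : Type*} [Fintype Ω] [Fintype α] [Fintype β] [DecidableEq α] [DecidableEq β]
    (p : Ω → ℝ) (X : Ω → α) (Y : Ω → β) : ℝ :=
  Hent p (fun ω => (X ω, Y ω)) - Hent p Y

/-- Mutual information `I(X;Y)`. -/
def MI {Ω α β : Type*} [Fintype Ω] [Fintype α] [Fintype β] [DecidableEq α] [DecidableEq β]
    (p : Ω → ℝ) (X : Ω → α) (Y : Ω → β) : ℝ :=
  Hent p X + Hent p Y - Hent p (fun ω => (X ω, Y ω))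

/-- Conditional mutual information `I(X;Y|Z) = H(X|Z) - H(X|(Y,Z))`. -/
def condMI {Ω α β γ : Type*} [Fintype Ω] [Fintype α] [Fintype β] [Fintype γ]
    [DecidableEq α] [DecidableEq β] [DecidableEq γ]
    (p : Ω → ℝ) (X : Ω → α) (Y : Ω → β) (Z : Ω → γ) : ℝ :=
  condH p X Z - condH p X (fun ω => (Y ω, Z ω))

/-- Total variation distance between distributions on a finite type. -/
def TV {α : Type*} [Fintype α] (q₁ q₂ : α → ℝ) : ℝ :=
  (∑ x, |q₁ x - q₂ x|) / 2

/-- Binary entropy function (base 2). -/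
def binEnt (d : ℝ) : ℝ :=
  -(d * Real.logb 2 d) - ((1 - d) * Real.logb 2 (1 - d))

/-- Min-entropy (base 2) of a distribution on a nonempty finite type. -/
def Hinf {α : Type*} [Fintype α] [Nonempty α] (q : α → ℝ) : ℝ :=
  -Real.logb 2 (⨆ x, q x)

/-!
Each coordinate of a uniform tuple in `({0,1}^ℓ)ⁿ` is uniform, so the event `Z_I = x` lies in the
union of the `n` events `Z_i = x`, each of probability `2^{-ℓ}`. Every atom of `Z_I` therefore has
mass at most `n 2^{-ℓ}`, and Shannon entropy is at least min-entropy: `H(Z_I) ≥ -log₂ (n 2^{-ℓ})`.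
-/

section Probability

variable {Ω α : Type*} [Fintype Ω] [DecidableEq α] {p : Ω → ℝ}

lemma pr_nonneg (hp : ∀ ω, 0 ≤ p ω) (X : Ω → α) (x : α) : 0 ≤ pr p X x :=
  sum_nonneg fun ω _ => ite_nonneg (hp ω) le_rfl

lemma sum_pr [Fintype α] (p : Ω → ℝ) (X : Ω → α) : ∑ x, pr p X x = ∑ ω, p ω := by
  unfold pr
  rw [sum_comm]
  simp

lemma pr_comp [Fintype α] {β : Type*} [DecidableEq β] (X : Ω → α) (g : α → β) (y : β) :
    pr p (fun ω => g (X ω)) y = ∑ x with g x = y, pr p X x := by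
  unfold pr
  rw [sum_comm]
  refine sum_congr rfl fun ω _ => ?_
  simp

lemma pr_apply_le_sum_pr {ι : Type*} [Fintype ι] (hp : ∀ ω, 0 ≤ p ω) (Z : Ω → ι → α)
    (I : Ω → ι) (x : α) :
    pr p (fun ω => Z ω (I ω)) x ≤ ∑ i, pr p (fun ω => Z ω i) x := by
  unfold pr
  rw [sum_comm]
  exact sum_le_sum fun ω _ =>
    single_le_sum (f := fun i => if Z ω i = x then p ω else 0)
      (fun _ _ => ite_nonneg (hp ω) le_rfl) (mem_univ (I ω))

lemma pr_eval_of_uniform {ι F : Type*} [Fintype ι] [DecidableEq ι] [Fintype F] [DecidableEq F]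
    {Z : Ω → ι → F} (hunif : ∀ z, pr p Z z = 1 / Fintype.card F ^ Fintype.card ι)
    (i : ι) (x : F) :
    pr p (fun ω => Z ω i) x = 1 / Fintype.card F := by
  have hF : (Fintype.card F : ℝ) ≠ 0 := Nat.cast_ne_zero.2 (Fintype.card_pos_iff.2 ⟨x⟩).ne'
  obtain ⟨k, hk⟩ := Nat.exists_eq_add_one_of_ne_zero (Fintype.card_pos_iff.2 ⟨i⟩).ne'
  have hcount : #{z : ι → F | z i = x} = Fintype.card F ^ k := by
    simpa [hk] using Fintype.card_filter_piFinset_const_eq_of_mem (univ : Finset F) i (mem_univ x)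
  rw [pr_comp Z (fun z => z i) x]
  simp only [hunif, sum_const, nsmul_eq_mul, hcount, hk, pow_succ]
  push_cast
  field_simp

end Probability

lemma neg_logb_le_Hq_of_le {α : Type*} [Fintype α] {q : α → ℝ} (hq0 : ∀ x, 0 ≤ q x)
    (hq1 : ∑ x, q x = 1) {c : ℝ} (hc : ∀ x, q x ≤ c) : -Real.logb 2 c ≤ Hq q := by
  calc -Real.logb 2 c = ∑ x, q x * -Real.logb 2 c := by rw [← sum_mul, hq1, one_mul]
    _ ≤ ∑ x, -(q x * Real.logb 2 (q x)) := sum_le_sum fun x _ => by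
      rcases (hq0 x).eq_or_lt with h0 | hpos
      · simp [← h0]
      · rw [← mul_neg]
        exact mul_le_mul_of_nonneg_left
          (neg_le_neg (Real.logb_le_logb_of_le one_lt_two hpos (hc x))) hpos.le

/-- If `I ∈ [n]` and `Z₁,…,Z_n ∈ {0,1}^ℓ` are jointly distributed and the
marginal of `(Z₁,…,Z_n)` is uniform on `{0,1}^{nℓ}`, then `H(Z_I) ≥ ℓ - log₂ n`. -/
theorem stmt_2 {Ω : Type*} [Fintype Ω] (n ℓ : ℕ) (hn : 0 < n) (p : Ω → ℝ) (hp : IsPMF p)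
    (I : Ω → Fin n) (Z : Ω → (Fin n → (Fin ℓ → Bool)))
    (hunif : ∀ z, pr p Z z = 1 / 2 ^ (n * ℓ)) :
    Hent p (fun ω => Z ω (I ω)) ≥ (ℓ : ℝ) - Real.logb 2 n := by
  obtain ⟨hp0, hp1⟩ := hp
  have hcoord (i : Fin n) (x : Fin ℓ → Bool) : pr p (fun ω => Z ω i) x = 1 / 2 ^ ℓ := by
    simpa using pr_eval_of_uniform (fun z => by simp [hunif, ← pow_mul, mul_comm]) i x
  have hatom (x : Fin ℓ → Bool) : pr p (fun ω => Z ω (I ω)) x ≤ n / 2 ^ ℓ :=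
    (pr_apply_le_sum_pr hp0 Z I x).trans_eq (by simp [hcoord, div_eq_mul_inv])
  have := neg_logb_le_Hq_of_le (pr_nonneg hp0 _) ((sum_pr p _).trans hp1) hatom
  rwa [Real.logb_div (by positivity) (by positivity), Real.logb_pow, Real.logb_self_eq_one
    one_lt_two, mul_one, neg_sub] at this

end
end

section
/- Let X₁, X₂ be random variables supported on a finite set 𝒳, and let δ = Δ(X₁,X₂) be their total variation distance. If 0 ≤ δ ≤ (|𝒳|-1)/|𝒳|, then |H(X₁) - H(X₂)| ≤ h(δ) + δ·log₂(|𝒳|-1), where h is the binary entropy function. -/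
open Finset

noncomputable section

/-!
Put `m = min p q`, a sub-probability vector of mass `1 - δ` with `δ = TV p q`. Subadditivity of
`x ↦ -x log x` splits `H(p)` into the entropy terms of `m` and of the excess `p - m`. The excess
has mass `δ` and lives on `{q < p}`, which misses at least one point since `∑ p = ∑ q`; by
Gibbs' inequality against the uniform weight `1/(|𝒳| - 1)` its terms add up to at most
`-δ log δ + δ log (|𝒳| - 1)`. Since `m ≤ q`, Gibbs' inequality against `q` bounds the terms of `m`
by `-(1 - δ) log (1 - δ) + H(q)`.
-/

namespace Real

theorem negMulLog_add_le {a b : ℝ} (ha : 0 ≤ a) (hb : 0 ≤ b) :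
    negMulLog (a + b) ≤ negMulLog a + negMulLog b := by
  rcases ha.eq_or_lt with rfl | ha
  · simp
  rcases hb.eq_or_lt with rfl | hb
  · simp
  have hla : log a ≤ log (a + b) := log_le_log ha (by linarith)
  have hlb : log b ≤ log (a + b) := log_le_log hb (by linarith)
  simp only [negMulLog, neg_mul]
  nlinarith

/-- The tangent line of the concave function `negMulLog` at `c` lies above its graph. -/
theorem negMulLog_le_tangent {a c : ℝ} (ha : 0 ≤ a) (hc : 0 < c) :
    negMulLog a ≤ a * -log c + c - a := by
  rcases ha.eq_or_lt with rfl | ha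
  · simpa using hc.le
  have h := mul_le_mul_of_nonneg_left (log_le_sub_one_of_pos (div_pos hc ha)) ha.le
  have hca : a * (c / a - 1) = c - a := by field_simp
  rw [log_div hc.ne' ha.ne', hca] at h
  simp only [negMulLog]
  linarith

end Real

open Real

section Gibbs

variable {ι : Type*} (s : Finset ι) {a : ι → ℝ}

/-- Gibbs' inequality for an unnormalised `a` against a sub-probability vector `w`. -/
theorem sum_negMulLog_le_negMulLog_sum_add (ha : ∀ i ∈ s, 0 ≤ a i) {w : ι → ℝ}
    (hw : ∀ i ∈ s, 0 ≤ w i) (haw : ∀ i ∈ s, w i = 0 → a i = 0) (hw1 : ∑ i ∈ s, w i ≤ 1) :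
    ∑ i ∈ s, negMulLog (a i) ≤ negMulLog (∑ i ∈ s, a i) + ∑ i ∈ s, a i * -log (w i) := by
  set A := ∑ i ∈ s, a i
  have hA : 0 ≤ A := sum_nonneg ha
  have key : ∀ i ∈ s, negMulLog (a i) ≤ a i * -log A + a i * -log (w i) + A * w i - a i := by
    intro i hi
    rcases (ha i hi).eq_or_lt with h0 | hpos
    · rw [← h0]
      simpa using mul_nonneg hA (hw i hi)
    have hAi : 0 < A := hpos.trans_le (single_le_sum ha hi)
    have hwi : 0 < w i := (hw i hi).lt_of_ne fun h => hpos.ne' (haw i hi h.symm)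
    have h := negMulLog_le_tangent (ha i hi) (mul_pos hAi hwi)
    rwa [log_mul hAi.ne' hwi.ne', neg_add, mul_add] at h
  calc ∑ i ∈ s, negMulLog (a i)
      ≤ ∑ i ∈ s, (a i * -log A + a i * -log (w i) + A * w i - a i) := sum_le_sum key
    _ = negMulLog A + ∑ i ∈ s, a i * -log (w i) + A * (∑ i ∈ s, w i - 1) := by
      simp only [sum_sub_distrib, sum_add_distrib, ← sum_mul, ← mul_sum, negMulLog]
      ring
    _ ≤ negMulLog A + ∑ i ∈ s, a i * -log (w i) :=
      add_le_of_nonpos_right (mul_nonpos_of_nonneg_of_nonpos hA (sub_nonpos.2 hw1))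

theorem sum_negMulLog_le_negMulLog_sum_add_mul_log (ha : ∀ i ∈ s, 0 ≤ a i) {m : ℝ}
    (hm : (#s : ℝ) ≤ m) :
    ∑ i ∈ s, negMulLog (a i) ≤ negMulLog (∑ i ∈ s, a i) + (∑ i ∈ s, a i) * log m := by
  have hm0 : 0 ≤ m := (Nat.cast_nonneg _).trans hm
  have hgibbs := sum_negMulLog_le_negMulLog_sum_add s ha (w := fun _ => m⁻¹)
    (fun _ _ => inv_nonneg.2 hm0)
    (fun i hi h => absurd hm (by rw [inv_eq_zero.1 h, not_le]; exact_mod_cast card_pos.2 ⟨i, hi⟩))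
    (by
      rw [sum_const, nsmul_eq_mul, ← div_eq_mul_inv]
      exact div_le_one_of_le₀ hm hm0)
  simpa only [log_inv, neg_neg, ← sum_mul] using hgibbs

/-- The entropy `∑ negMulLog a - negMulLog (∑ a)` of an unnormalised vector is at most the entropy
of a sub-probability vector dominating it. -/
theorem sum_negMulLog_le_negMulLog_sum_add_of_le (ha : ∀ i ∈ s, 0 ≤ a i) {q : ι → ℝ}
    (haq : ∀ i ∈ s, a i ≤ q i) (hq1 : ∑ i ∈ s, q i ≤ 1) :
    ∑ i ∈ s, negMulLog (a i) ≤ negMulLog (∑ i ∈ s, a i) + ∑ i ∈ s, negMulLog (q i) := by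
  have hq : ∀ i ∈ s, 0 ≤ q i := fun i hi => (ha i hi).trans (haq i hi)
  refine (sum_negMulLog_le_negMulLog_sum_add s ha hq
    (fun i hi h => le_antisymm (h ▸ haq i hi) (ha i hi)) hq1).trans ?_
  gcongr with i hi
  have hlog : 0 ≤ -log (q i) :=
    neg_nonneg.2 (log_nonpos (hq i hi) ((single_le_sum hq hi).trans hq1))
  calc a i * -log (q i) ≤ q i * -log (q i) := mul_le_mul_of_nonneg_right (haq i hi) hlog
    _ = negMulLog (q i) := by simp only [negMulLog]; ring

end Gibbs

theorem Hq_eq_sum_negMulLog_div {α : Type*} [Fintype α] (q : α → ℝ) :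
    Hq q = (∑ x, negMulLog (q x)) / log 2 := by
  rw [Hq, sum_div]
  congr 1 with x
  simp only [logb, negMulLog]
  ring

theorem binEnt_eq_negMulLog_add_negMulLog_one_sub_div (d : ℝ) :
    binEnt d = (negMulLog d + negMulLog (1 - d)) / log 2 := by
  simp only [binEnt, logb, negMulLog]
  ring

section TotalVariation

variable {α : Type*} [Fintype α] {p q : α → ℝ}

theorem TV_comm (p q : α → ℝ) : TV p q = TV q p := by
  simp only [TV, abs_sub_comm]

theorem sum_min_eq_one_sub_TV (hp : IsPMF p) (hq : IsPMF q) :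
    ∑ x, min (p x) (q x) = 1 - TV p q := by
  have habs : ∀ x, |p x - q x| = p x + q x - 2 * min (p x) (q x) := fun x => by
    rw [← max_sub_min_eq_abs', ← min_add_max (p x) (q x)]
    ring
  simp only [TV, habs, sum_sub_distrib, sum_add_distrib, ← mul_sum, hp.2, hq.2]
  ring

theorem sum_negMulLog_sub_le_of_TV (hp : IsPMF p) (hq : IsPMF q) :
    ∑ x, negMulLog (p x) - ∑ x, negMulLog (q x) ≤
      negMulLog (TV p q) + negMulLog (1 - TV p q) + TV p q * log (Fintype.card α - 1) := by
  classical
  set a : α → ℝ := fun x => min (p x) (q x)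
  set S := univ.filter fun x => q x < p x
  have ha : ∀ x, 0 ≤ a x := fun x => le_min (hp.1 x) (hq.1 x)
  have hap : ∀ x, a x ≤ p x := fun x => min_le_left (p x) (q x)
  have hsum_a : ∑ x, a x = 1 - TV p q := sum_min_eq_one_sub_TV hp hq
  have hzero : ∀ x ∉ S, p x - a x = 0 := fun x hx => by
    simp only [S, mem_filter, mem_univ, true_and, not_lt] at hx
    simp [a, min_eq_left hx]
  have hS : (#S : ℝ) ≤ Fintype.card α - 1 := by
    have huniv : (univ : Finset α).Nonempty :=
      nonempty_of_sum_ne_zero (by rw [hp.2]; exact one_ne_zero)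
    obtain ⟨x, -, hx⟩ := exists_le_of_sum_le huniv (hp.2.trans hq.2.symm).le
    have hlt : #S < Fintype.card α := card_lt_card (filter_ssubset.2 ⟨x, mem_univ x, hx.not_gt⟩)
    rw [le_sub_iff_add_le]
    exact_mod_cast hlt
  have hsum_d : ∑ x ∈ S, (p x - a x) = TV p q := by
    rw [sum_subset (subset_univ S) fun x _ hx => hzero x hx, sum_sub_distrib, hp.2, hsum_a]
    ring
  have h_split : ∑ x, negMulLog (p x) ≤ ∑ x, negMulLog (a x) + ∑ x ∈ S, negMulLog (p x - a x) := by
    rw [sum_subset (subset_univ S) fun x _ hx => by rw [hzero x hx, negMulLog_zero],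
      ← sum_add_distrib]
    refine sum_le_sum fun x _ => ?_
    simpa only [add_sub_cancel] using negMulLog_add_le (ha x) (sub_nonneg.2 (hap x))
  have h_excess := sum_negMulLog_le_negMulLog_sum_add_mul_log S
    (fun x _ => sub_nonneg.2 (hap x)) hS
  have h_overlap := sum_negMulLog_le_negMulLog_sum_add_of_le univ (fun x _ => ha x)
    (fun x _ => min_le_right (p x) (q x)) hq.2.le
  rw [hsum_d] at h_excess
  rw [hsum_a] at h_overlap
  linarith

theorem Hq_sub_le_of_TV (hp : IsPMF p) (hq : IsPMF q) :
    Hq p - Hq q ≤ binEnt (TV p q) + TV p q * logb 2 (Fintype.card α - 1) := by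
  rw [Hq_eq_sum_negMulLog_div, Hq_eq_sum_negMulLog_div,
    binEnt_eq_negMulLog_add_negMulLog_one_sub_div, logb, ← sub_div, mul_div_assoc', ← add_div]
  exact div_le_div_of_nonneg_right (sum_negMulLog_sub_le_of_TV hp hq) (log_nonneg one_le_two)

end TotalVariation

theorem stmt_5_general {𝒳 : Type*} [Fintype 𝒳] (q₁ q₂ : 𝒳 → ℝ)
    (h₁ : IsPMF q₁) (h₂ : IsPMF q₂) (δ : ℝ) (hδ : δ = TV q₁ q₂) :
    |Hq q₁ - Hq q₂| ≤ binEnt δ + δ * Real.logb 2 ((Fintype.card 𝒳 : ℝ) - 1) := by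
  subst hδ
  rw [abs_sub_le_iff]
  exact ⟨Hq_sub_le_of_TV h₁ h₂, TV_comm q₁ q₂ ▸ Hq_sub_le_of_TV h₂ h₁⟩

/-- Continuity of entropy in total variation distance: if
`δ = Δ(X₁,X₂) ≤ (|𝒳|-1)/|𝒳|`, then `|H(X₁) - H(X₂)| ≤ h(δ) + δ·log₂(|𝒳|-1)`. -/
theorem stmt_5 {𝒳 : Type*} [Fintype 𝒳] (q₁ q₂ : 𝒳 → ℝ)
    (h₁ : IsPMF q₁) (h₂ : IsPMF q₂) (δ : ℝ) (hδ : δ = TV q₁ q₂)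
    (hδ0 : 0 ≤ δ) (hδ1 : δ ≤ ((Fintype.card 𝒳 : ℝ) - 1) / (Fintype.card 𝒳 : ℝ)) :
    |Hq q₁ - Hq q₂| ≤ binEnt δ + δ * Real.logb 2 ((Fintype.card 𝒳 : ℝ) - 1) :=
  stmt_5_general q₁ q₂ h₁ h₂ δ hδ

end
end

section
/- For the pointer-chasing source μ_{r,n,ℓ}, with (X,Y) ∼ μ_{r,n,ℓ}, the mutual information I(X;Y) equals ℓ. -/
open Finset

noncomputable section

/-- Sample space of the pointer-chasing source `μ_{r,n,ℓ}`:
an initial pointer `i₀ ∈ [n]`, permutations `π₁,…,π_r` of `[n]`,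
Alice's strings `A₁,…,A_n ∈ {0,1}^ℓ` and Bob's strings `B₁,…,B_n ∈ {0,1}^ℓ`. -/
abbrev PCOmega (r n ℓ : ℕ) : Type :=
  Fin n × (Fin r → Equiv.Perm (Fin n)) × (Fin n → Fin ℓ → Bool) × (Fin n → Fin ℓ → Bool)

/-- The chased pointer `π_r(π_{r-1}(⋯π₁(i)⋯))`. -/
def chase {r n : ℕ} (π : Fin r → Equiv.Perm (Fin n)) (i : Fin n) : Fin n :=
  (List.ofFn π).foldl (fun a σ => σ a) i

/-- The pmf of the pointer-chasing source `μ_{r,n,ℓ}`: `i₀`, the `π_t`, and the strings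
are uniform and independent, except that `A_j = B_j` at the chased index
`j = π_r∘⋯∘π₁(i₀)`. -/
def pcSource (r n ℓ : ℕ) : PCOmega r n ℓ → ℝ := fun ω =>
  if ω.2.2.1 (chase ω.2.1 ω.1) = ω.2.2.2 (chase ω.2.1 ω.1) then
    ((n : ℝ) * (Nat.factorial n : ℝ) ^ r * 2 ^ (n * ℓ) * 2 ^ ((n - 1) * ℓ))⁻¹
  else 0

/-- Alice's input `X`: the odd-indexed permutations `π₁, π₃, …` (0-based even indices)
together with her strings `A₁,…,A_n`. -/
def aliceInput {r n ℓ : ℕ} (ω : PCOmega r n ℓ) :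
    ({k : Fin r // k.val % 2 = 0} → Equiv.Perm (Fin n)) × (Fin n → Fin ℓ → Bool) :=
  (fun k => ω.2.1 k.val, ω.2.2.1)

/-- Bob's input `Y`: the initial pointer `i₀`, the even-indexed permutations
`π₂, π₄, …` (0-based odd indices), and his strings `B₁,…,B_n`. -/
def bobInput {r n ℓ : ℕ} (ω : PCOmega r n ℓ) :
    Fin n × ({k : Fin r // k.val % 2 = 1} → Equiv.Perm (Fin n)) × (Fin n → Fin ℓ → Bool) :=
  (ω.1, fun k => ω.2.1 k.val, ω.2.2.2)

/-! ### Auxiliary lemmas for the proof of stmt_9 -/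

/-- Entropy of a distribution that is uniform on the support of `P`. -/
lemma Hq_indicator' {α : Type*} [Fintype α] (q : α → ℝ) (P : α → Prop) [DecidablePred P]
    (c : ℝ) (hc : 0 < c)
    (hq : ∀ x, q x = if P x then c⁻¹ else 0)
    (hcount : (∑ x, (if P x then (1:ℝ) else 0)) = c) :
    Hq q = Real.logb 2 c := by
  have h1 : ∀ x : α, -(q x * Real.logb 2 (q x))
      = (if P x then (1:ℝ) else 0) * (c⁻¹ * Real.logb 2 c) := by
    intro x
    rw [hq x]
    by_cases h : P x
    · simp only [if_pos h, Real.logb_inv]; ring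
    · simp [h]
  unfold Hq
  rw [Finset.sum_congr rfl fun x _ => h1 x, ← Finset.sum_mul, hcount, ← mul_assoc,
    mul_inv_cancel₀ hc.ne', one_mul]

/-- Entropy of the uniform distribution. -/
lemma Hq_const' {α : Type*} [Fintype α] (q : α → ℝ) (c : ℝ) (hc : 0 < c)
    (hq : ∀ x, q x = c⁻¹) (hcard : (Fintype.card α : ℝ) = c) :
    Hq q = Real.logb 2 c := by
  refine Hq_indicator' q (fun _ => True) c hc (fun x => by simp [hq x]) ?_
  simp [Finset.card_univ, hcard]

/-- Counting: the number of `B`'s whose value at `j` is a fixed `v`. -/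
lemma sum_if_apply_eq {n ℓ : ℕ} (j : Fin n) (v : Fin ℓ → Bool) :
    (∑ B : Fin n → Fin ℓ → Bool, if B j = v then (1:ℝ) else 0)
      = 2 ^ ((n - 1) * ℓ) := by
  rw [← Equiv.sum_comp (Equiv.funSplitAt j (Fin ℓ → Bool)).symm
    (fun B => if B j = v then (1:ℝ) else 0)]
  have hj : ∀ z : (Fin ℓ → Bool) × ({ j' // j' ≠ j } → Fin ℓ → Bool),
      (Equiv.funSplitAt j (Fin ℓ → Bool)).symm z j = z.1 := by
    intro z
    simp [Equiv.funSplitAt, Equiv.piSplitAt]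
  simp only [hj]
  rw [Fintype.sum_prod_type]
  have hcard : (Fintype.card ({ j' // j' ≠ j } → Fin ℓ → Bool) : ℝ) = 2 ^ ((n - 1) * ℓ) := by
    rw [Fintype.card_fun, Fintype.card_fun, Fintype.card_bool, Fintype.card_fin]
    have h1 : Fintype.card { j' // j' ≠ j } = n - 1 := by
      have h2 : Fintype.card { j' : Fin n // ¬ (j' = j) } = n - 1 := by
        rw [Fintype.card_subtype_compl, Fintype.card_subtype_eq, Fintype.card_fin]
      exact h2
    rw [h1]
    push_cast
    rw [← pow_mul, mul_comm ℓ (n-1)]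
  calc (∑ a : Fin ℓ → Bool, ∑ _g : { j' // j' ≠ j } → Fin ℓ → Bool,
        if a = v then (1:ℝ) else 0)
      = ∑ a : Fin ℓ → Bool, if a = v then (Fintype.card ({ j' // j' ≠ j } → Fin ℓ → Bool) : ℝ)
          else 0 := by
        refine Finset.sum_congr rfl fun a _ => ?_
        by_cases h : a = v <;> simp [h, Finset.card_univ]
    _ = (Fintype.card ({ j' // j' ≠ j } → Fin ℓ → Bool) : ℝ) := by
        rw [Finset.sum_ite_eq' Finset.univ v]; simp
    _ = 2 ^ ((n - 1) * ℓ) := hcard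

/-- Merge the odd-indexed and even-indexed permutations into a single family. -/
def mergePerms {r n : ℕ} (πo : {k : Fin r // k.val % 2 = 0} → Equiv.Perm (Fin n))
    (πe : {k : Fin r // k.val % 2 = 1} → Equiv.Perm (Fin n)) : Fin r → Equiv.Perm (Fin n) :=
  fun k => if h : k.val % 2 = 0 then πo ⟨k, h⟩ else πe ⟨k, by omega⟩

/-- The sample space splits as a product of Alice's and Bob's inputs. -/
def pcEquiv (r n ℓ : ℕ) : PCOmega r n ℓ ≃
    ((({k : Fin r // k.val % 2 = 0} → Equiv.Perm (Fin n)) × (Fin n → Fin ℓ → Bool)) ×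
      (Fin n × ({k : Fin r // k.val % 2 = 1} → Equiv.Perm (Fin n)) × (Fin n → Fin ℓ → Bool))) where
  toFun ω := (aliceInput ω, bobInput ω)
  invFun z := (z.2.1, mergePerms z.1.1 z.2.2.1, z.1.2, z.2.2.2)
  left_inv := fun ⟨i, π, A, B⟩ => by
    refine Prod.ext rfl (Prod.ext ?_ rfl)
    funext k
    simp only [mergePerms, aliceInput, bobInput]
    split <;> rfl
  right_inv := fun ⟨⟨πo, A⟩, i, πe, B⟩ => by
    refine Prod.ext (Prod.ext ?_ rfl) (Prod.ext rfl (Prod.ext ?_ rfl))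
    · funext k
      simp only [aliceInput, mergePerms]
      rw [dif_pos k.prop]
    · funext k
      simp only [bobInput, mergePerms]
      rw [dif_neg (by have := k.prop; omega)]

/-- Total mass counting for the pointer-chasing source's support. -/
lemma pc_count (r n ℓ : ℕ) :
    (∑ ω : PCOmega r n ℓ, if ω.2.2.1 (chase ω.2.1 ω.1) = ω.2.2.2 (chase ω.2.1 ω.1)
        then (1:ℝ) else 0)
      = (n : ℝ) * (Nat.factorial n : ℝ) ^ r * 2 ^ (n * ℓ) * 2 ^ ((n - 1) * ℓ) := by
  have inner : ∀ (i : Fin n) (π : Fin r → Equiv.Perm (Fin n)) (A : Fin n → Fin ℓ → Bool),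
      (∑ B : Fin n → Fin ℓ → Bool,
        if A (chase π i) = B (chase π i) then (1:ℝ) else 0) = 2 ^ ((n - 1) * ℓ) := by
    intro i π A
    rw [← sum_if_apply_eq (chase π i) (A (chase π i))]
    exact Finset.sum_congr rfl fun B _ => if_congr eq_comm rfl rfl
  simp only [Fintype.sum_prod_type]
  simp only [inner]
  simp only [Finset.sum_const, Finset.card_univ, Fintype.card_fun, Fintype.card_perm,
    Fintype.card_fin, Fintype.card_bool, nsmul_eq_mul]
  push_cast
  rw [← pow_mul]
  ring

set_option synthInstance.maxHeartbeats 1000000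
set_option maxHeartbeats 4000000

/-- For the pointer-chasing source `μ_{r,n,ℓ}`, `I(X;Y) = ℓ`. -/
theorem stmt_9 (r n ℓ : ℕ) (hn : 0 < n) :
    MI (pcSource r n ℓ) aliceInput bobInput = ℓ := by
  set a := Fintype.card {k : Fin r // k.val % 2 = 0} with ha
  set b := Fintype.card {k : Fin r // k.val % 2 = 1} with hb
  have hab : a + b = r := by
    have h1 : b = Fintype.card {k : Fin r // ¬ (k.val % 2 = 0)} :=
      Fintype.card_congr (Equiv.subtypeEquivRight (fun k => by omega))
    rw [Fintype.card_subtype_compl, Fintype.card_fin] at h1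
    have h2 := Fintype.card_subtype_le (fun k : Fin r => k.val % 2 = 0)
    rw [Fintype.card_fin] at h2
    omega
  -- real constants
  set nf : ℝ := (Nat.factorial n : ℝ) with hnf
  have hnf0 : 0 < nf := by positivity
  set c : ℝ := (n : ℝ) * nf ^ r * 2 ^ (n * ℓ) * 2 ^ ((n - 1) * ℓ) with hcdef
  set cA : ℝ := nf ^ a * 2 ^ (n * ℓ) with hcAdef
  set cB : ℝ := (n : ℝ) * nf ^ b * 2 ^ (n * ℓ) with hcBdef
  have hn0 : (0:ℝ) < n := by exact_mod_cast hn
  have hc0 : 0 < c := by positivity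
  have hcA0 : 0 < cA := by positivity
  have hcB0 : 0 < cB := by positivity
  have hnl : (n - 1) * ℓ + ℓ = n * ℓ := by
    cases n with
    | zero => omega
    | succ m => simp only [Nat.succ_sub_one]; ring
  -- the source as an indicator
  have hsource : ∀ ω : PCOmega r n ℓ, pcSource r n ℓ ω =
      if ω.2.2.1 (chase ω.2.1 ω.1) = ω.2.2.2 (chase ω.2.1 ω.1) then c⁻¹ else 0 := by
    intro ω; rfl
  set e := pcEquiv r n ℓ with he
  -- value of the source at a merged point
  have hval : ∀ (x : ({k : Fin r // k.val % 2 = 0} → Equiv.Perm (Fin n)) × (Fin n → Fin ℓ → Bool))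
      (i : Fin n) (πe : {k : Fin r // k.val % 2 = 1} → Equiv.Perm (Fin n))
      (B : Fin n → Fin ℓ → Bool),
      pcSource r n ℓ (e.symm (x, (i, πe, B))) =
        if x.2 (chase (mergePerms x.1 πe) i) = B (chase (mergePerms x.1 πe) i)
          then c⁻¹ else 0 := by
    intro x i πe B; rfl
  -- joint entropy
  letI iDE : DecidableEq
      ((({k : Fin r // k.val % 2 = 0} → Equiv.Perm (Fin n)) × (Fin n → Fin ℓ → Bool)) ×
        (Fin n × ({k : Fin r // k.val % 2 = 1} → Equiv.Perm (Fin n)) × (Fin n → Fin ℓ → Bool))) :=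
    fun a b => instDecidableEqProd a b
  have hjoint : Hent (pcSource r n ℓ) (fun ω : PCOmega r n ℓ => (aliceInput ω, bobInput ω))
      = Real.logb 2 c := by
    have hpr : ∀ z, pr (pcSource r n ℓ) (fun ω : PCOmega r n ℓ => (aliceInput ω, bobInput ω)) z
        = pcSource r n ℓ (e.symm z) := by
      intro z
      unfold pr
      have : ∀ ω : PCOmega r n ℓ,
          (if (aliceInput ω, bobInput ω) = z then pcSource r n ℓ ω else 0)
          = if ω = e.symm z then pcSource r n ℓ ω else 0 := by
        intro ω
        congr 1
        rw [eq_iff_iff]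
        constructor
        · intro h; exact (Equiv.eq_symm_apply e).2 h
        · intro h; exact (Equiv.eq_symm_apply e).1 h
      refine (Finset.sum_eq_single (e.symm z) (fun ω _ hne => if_neg fun h => ?_)
        (fun h => absurd (Finset.mem_univ _) h)).trans (if_pos ?_)
      · exact hne ((Equiv.eq_symm_apply e).2 h)
      · exact e.apply_symm_apply z
    unfold Hent
    have : Hq (pr (pcSource r n ℓ) (fun ω : PCOmega r n ℓ => (aliceInput ω, bobInput ω)))
        = Hq (pcSource r n ℓ) := by
      unfold Hq
      rw [show (pr (pcSource r n ℓ) (fun ω : PCOmega r n ℓ => (aliceInput ω, bobInput ω)))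
        = fun z => pcSource r n ℓ (e.symm z) from funext hpr]
      exact Equiv.sum_comp e.symm (fun ω => -(pcSource r n ℓ ω * Real.logb 2 (pcSource r n ℓ ω)))
    rw [this]
    refine Hq_indicator' _
      (fun ω : PCOmega r n ℓ => ω.2.2.1 (chase ω.2.1 ω.1) = ω.2.2.2 (chase ω.2.1 ω.1))
      c hc0 (fun ω => by rw [hsource ω]) ?_
    rw [pc_count]
  -- Alice's marginal
  have hX : ∀ x, pr (pcSource r n ℓ) aliceInput x = cA⁻¹ := by
    intro x
    unfold pr
    rw [← Equiv.sum_comp e.symm (fun ω => if aliceInput ω = x then pcSource r n ℓ ω else 0)]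
    have hfst : ∀ z, aliceInput (e.symm z) = z.1 :=
      fun z => congrArg Prod.fst (e.apply_symm_apply z)
    simp only [hfst]
    rw [Fintype.sum_prod_type]
    have hstep : ∀ x', (∑ y, if x' = x then pcSource r n ℓ (e.symm (x', y)) else 0)
        = if x' = x then (∑ y, pcSource r n ℓ (e.symm (x', y))) else 0 := by
      intro x'; split <;> simp
    rw [Finset.sum_congr rfl fun x' _ => hstep x', Finset.sum_ite_eq' Finset.univ x]
    simp only [Finset.mem_univ, if_true]
    have hsum : (∑ y, pcSource r n ℓ (e.symm (x, y)))
        = (n : ℝ) * nf ^ b * 2 ^ ((n - 1) * ℓ) * c⁻¹ := by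
      simp only [Fintype.sum_prod_type]
      have hinner : ∀ (i : Fin n) (πe : {k : Fin r // k.val % 2 = 1} → Equiv.Perm (Fin n)),
          (∑ B : Fin n → Fin ℓ → Bool, pcSource r n ℓ (e.symm (x, (i, πe, B))))
          = 2 ^ ((n - 1) * ℓ) * c⁻¹ := by
        intro i πe
        have : ∀ B : Fin n → Fin ℓ → Bool, pcSource r n ℓ (e.symm (x, (i, πe, B)))
            = (if B (chase (mergePerms x.1 πe) i) = x.2 (chase (mergePerms x.1 πe) i)
                then (1:ℝ) else 0) * c⁻¹ := by
          intro B
          rw [hval]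
          by_cases h : x.2 (chase (mergePerms x.1 πe) i) = B (chase (mergePerms x.1 πe) i)
          · rw [if_pos h, if_pos h.symm, one_mul]
          · rw [if_neg h, if_neg (fun hh => h hh.symm), zero_mul]
        rw [Finset.sum_congr rfl fun B _ => this B, ← Finset.sum_mul,
          sum_if_apply_eq (chase (mergePerms x.1 πe) i)]
      simp only [hinner]
      simp only [Finset.sum_const, Finset.card_univ, Fintype.card_fun, Fintype.card_perm,
        Fintype.card_fin, nsmul_eq_mul]
      push_cast
      ring
    rw [hsum]
    have hkey : c = cA * ((n : ℝ) * nf ^ b * 2 ^ ((n - 1) * ℓ)) := by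
      rw [hcdef, hcAdef, ← hab, pow_add]; ring
    rw [hkey]
    have hk0 : (0:ℝ) < (n : ℝ) * nf ^ b * 2 ^ ((n - 1) * ℓ) := by positivity
    field_simp
  -- Bob's marginal
  have hY : ∀ y, pr (pcSource r n ℓ) bobInput y = cB⁻¹ := by
    intro y
    unfold pr
    rw [← Equiv.sum_comp e.symm (fun ω => if bobInput ω = y then pcSource r n ℓ ω else 0)]
    have hsnd : ∀ z, bobInput (e.symm z) = z.2 :=
      fun z => congrArg Prod.snd (e.apply_symm_apply z)
    simp only [hsnd]
    rw [Fintype.sum_prod_type, Finset.sum_comm]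
    have hstep : ∀ y', (∑ x', if y' = y then pcSource r n ℓ (e.symm (x', y')) else 0)
        = if y' = y then (∑ x', pcSource r n ℓ (e.symm (x', y'))) else 0 := by
      intro y'; split <;> simp
    rw [Finset.sum_congr rfl fun y' _ => hstep y', Finset.sum_ite_eq' Finset.univ y]
    simp only [Finset.mem_univ, if_true]
    have hsum : (∑ x', pcSource r n ℓ (e.symm (x', y)))
        = nf ^ a * 2 ^ ((n - 1) * ℓ) * c⁻¹ := by
      simp only [Fintype.sum_prod_type]
      have hinner : ∀ (πo : {k : Fin r // k.val % 2 = 0} → Equiv.Perm (Fin n)),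
          (∑ A : Fin n → Fin ℓ → Bool, pcSource r n ℓ (e.symm ((πo, A), y)))
          = 2 ^ ((n - 1) * ℓ) * c⁻¹ := by
        intro πo
        have : ∀ A : Fin n → Fin ℓ → Bool, pcSource r n ℓ (e.symm ((πo, A), y))
            = (if A (chase (mergePerms πo y.2.1) y.1)
                  = y.2.2 (chase (mergePerms πo y.2.1) y.1)
                then (1:ℝ) else 0) * c⁻¹ := by
          intro A
          have h0 : pcSource r n ℓ (e.symm ((πo, A), y))
              = if A (chase (mergePerms πo y.2.1) y.1)
                  = y.2.2 (chase (mergePerms πo y.2.1) y.1) then c⁻¹ else 0 := rfl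
          rw [h0]
          split <;> simp
        rw [Finset.sum_congr rfl fun A _ => this A, ← Finset.sum_mul,
          sum_if_apply_eq (chase (mergePerms πo y.2.1) y.1)]
      simp only [hinner]
      simp only [Finset.sum_const, Finset.card_univ, Fintype.card_fun, Fintype.card_perm,
        Fintype.card_fin, nsmul_eq_mul]
      push_cast
      ring
    rw [hsum]
    have hkey : c = cB * (nf ^ a * 2 ^ ((n - 1) * ℓ)) := by
      rw [hcdef, hcBdef, ← hab, pow_add]; ring
    rw [hkey]
    have hk0 : (0:ℝ) < nf ^ a * 2 ^ ((n - 1) * ℓ) := by positivity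
    field_simp
  -- entropies of the marginals
  have hHX : Hent (pcSource r n ℓ) (aliceInput (r := r) (n := n) (ℓ := ℓ))
      = Real.logb 2 cA := by
    unfold Hent
    refine Hq_const' _ cA hcA0 hX ?_
    simp only [Fintype.card_prod, Fintype.card_fun, Fintype.card_perm, Fintype.card_fin,
      Fintype.card_bool, ← ha, hcAdef]
    push_cast
    rw [← pow_mul, mul_comm ℓ n]
  have hHY : Hent (pcSource r n ℓ) (bobInput (r := r) (n := n) (ℓ := ℓ))
      = Real.logb 2 cB := by
    unfold Hent
    refine Hq_const' _ cB hcB0 hY ?_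
    simp only [Fintype.card_prod, Fintype.card_fun, Fintype.card_perm, Fintype.card_fin,
      Fintype.card_bool, ← hb, hcBdef]
    push_cast
    rw [← pow_mul, mul_comm ℓ n, ← hnf]
    ring
  -- put things together
  unfold MI
  rw [hHX, hHY]
  have hfinal : Real.logb 2 cA + Real.logb 2 cB - Real.logb 2 c = ℓ := by
    have h2l : (0:ℝ) < 2 ^ ℓ := by positivity
    have hmul : cA * cB = c * 2 ^ ℓ := by
      rw [hcAdef, hcBdef, hcdef, ← hab, pow_add, ← hnl, pow_add]
      ring
    rw [← Real.logb_mul hcA0.ne' hcB0.ne', hmul, Real.logb_mul hc0.ne' h2l.ne',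
      Real.logb_pow, Real.logb_self_eq_one (by norm_num)]
    ring
  rw [← hjoint] at hfinal
  exact hfinal

end
end
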